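/- arXiv:2407.15585 — 2 statements merged into one kernel-verified Lean document; each statement's English description precedes it below -/
import Mathlib

section
/- Let A ⊆ ℝ^m be finite, F̄ ⊆ A, and suppose π ∈ ℝ^m with π ≥ 0, π ≠ 0, and β ∈ ℝ satisfy ⟨π, a⟩ ≤ β for all a ∈ F̄ and ⟨π, b⟩ > β for some b ∈ A. Then the set M = argmax_{a ∈ A} ⟨π, a⟩ is disjoint from F̄ and contains at least one extreme point of vrs(A). In particular, translating a separating hyperplane uncovers a new frame element a* ∈ A \ F̄. -/
open scoped Classical
open Finset

noncomputable section

/-- The VRS (free-disposal convex) hull of a finite set of points in ℝ^m. -/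
def vrs {m : ℕ} (S : Finset (Fin m → ℝ)) : Set (Fin m → ℝ) :=
  {z | ∃ l : (Fin m → ℝ) → ℝ, (∀ a, 0 ≤ l a) ∧ (∑ a ∈ S, l a) = 1 ∧
    ∀ k, z k ≤ ∑ a ∈ S, l a * a k}

/-- The frame of `A`: the points of `A` that are extreme points of `vrs A`. -/
def frame {m : ℕ} (A : Finset (Fin m → ℝ)) : Finset (Fin m → ℝ) :=
  A.filter fun a => a ∈ Set.extremePoints ℝ (vrs A)

/-!
Compare points `z` lexicographically by `(π ⬝ᵥ z, z 0, …, z (m - 1))`. This is an injective linear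
map into a linearly ordered vector space, monotone for the coordinatewise order because `π ≥ 0`.
A lexicographic maximiser `c` of it over `A` lies in the argmax of `π ⬝ᵥ ·`, and it dominates every
point of `vrs A` (each is below a convex combination of `A`); a strict maximiser of an injective
linear map into a linearly ordered space cannot be an interior point of a segment, so `c` is
extreme. The argmax misses `Fbar` since `π ⬝ᵥ · ≤ β < π ⬝ᵥ b` there.
-/

instance Pi.Lex.posSMulStrictMono {ι 𝕜 α : Type*} [LinearOrder ι] [Zero 𝕜] [Preorder 𝕜]
    [PartialOrder α] [SMul 𝕜 α] [PosSMulStrictMono 𝕜 α] : PosSMulStrictMono 𝕜 (Lex (ι → α)) where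
  smul_lt_smul_of_pos_left t ht _ _ := fun ⟨i, hi, hlt⟩ =>
    ⟨i, fun j hj => congrArg (t • · : α → α) (hi j hj), smul_lt_smul_of_pos_left hlt ht⟩

theorem mem_extremePoints_of_forall_le_of_injective {𝕜 E V : Type*} [Semiring 𝕜] [PartialOrder 𝕜]
    [AddCommMonoid E] [Module 𝕜 E] [AddCommMonoid V] [LinearOrder V]
    [IsOrderedCancelAddMonoid V] [Module 𝕜 V] [PosSMulStrictMono 𝕜 V]
    (Φ : E →ₗ[𝕜] V) (hΦ : Function.Injective Φ) {S : Set E} {c : E} (hc : c ∈ S)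
    (hmax : ∀ z ∈ S, Φ z ≤ Φ c) : c ∈ S.extremePoints 𝕜 := by
  have left_eq : ∀ x ∈ S, ∀ y ∈ S, c ∈ openSegment 𝕜 x y → x = c := by
    rintro x hx y hy ⟨a, b, ha, hb, hab, rfl⟩
    refine hΦ ((hmax x hx).eq_of_not_lt fun hlt => (lt_irrefl (Φ (a • x + b • y))) ?_)
    calc Φ (a • x + b • y) = a • Φ x + b • Φ y := by simp
      _ < a • Φ (a • x + b • y) + b • Φ (a • x + b • y) :=
        add_lt_add_of_lt_of_le (smul_lt_smul_of_pos_left hlt ha)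
          (smul_le_smul_of_nonneg_left (hmax y hy) hb.le)
      _ = Φ (a • x + b • y) := by rw [← add_smul, hab, one_smul]
  exact mem_extremePoints.2 ⟨hc, fun x hx y hy hxy =>
    ⟨left_eq x hx y hy hxy, left_eq y hy x hx (openSegment_symm 𝕜 x y ▸ hxy)⟩⟩

section LexWithDot

variable {ι R : Type*} [Fintype ι] [CommSemiring R]

def lexWithDot (π : ι → R) : (ι → R) →ₗ[R] Lex (WithBot ι → R) where
  toFun z := toLex fun i => WithBot.recBotCoe (π ⬝ᵥ z) z i
  map_add' z w := by
    rw [← toLex_add]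
    exact congrArg toLex (funext fun i => by cases i <;> simp [dotProduct_add])
  map_smul' t z := by
    rw [RingHom.id_apply, ← toLex_smul]
    exact congrArg toLex (funext fun i => by cases i <;> simp [dotProduct_smul])

theorem lexWithDot_injective (π : ι → R) : Function.Injective (lexWithDot π) :=
  fun _ _ h => funext fun i => congrFun h i

theorem lexWithDot_mono [LinearOrder ι] [PartialOrder R] [IsOrderedRing R] {π : ι → R}
    (hπ : 0 ≤ π) : Monotone (lexWithDot π) := by
  intro z w hzw
  refine Pi.toLex_monotone fun i => ?_
  cases i
  · exact dotProduct_le_dotProduct_of_nonneg_left hzw hπ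
  · exact hzw _

theorem dotProduct_le_of_lexWithDot_le [LinearOrder ι] [LinearOrder R] {π z w : ι → R}
    (h : lexWithDot π z ≤ lexWithDot π w) : π ⬝ᵥ z ≤ π ⬝ᵥ w :=
  not_lt.1 fun hlt => h.not_gt ⟨⊥, fun _ hj => absurd hj not_lt_bot, hlt⟩

end LexWithDot

section Vrs

variable {m : ℕ} {A : Finset (Fin m → ℝ)}

theorem mem_vrs_of_mem {a : Fin m → ℝ} (ha : a ∈ A) : a ∈ vrs A :=
  ⟨fun b => if b = a then 1 else 0, fun b => by positivity, by simp [ha], fun k => by simp [ha]⟩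

theorem map_le_of_mem_vrs {V : Type*} [AddCommMonoid V] [PartialOrder V] [IsOrderedAddMonoid V]
    [Module ℝ V] [PosSMulMono ℝ V] {Φ : (Fin m → ℝ) →ₗ[ℝ] V} (hΦ : Monotone Φ) {c : Fin m → ℝ}
    (hc : ∀ a ∈ A, Φ a ≤ Φ c) {z : Fin m → ℝ} (hz : z ∈ vrs A) : Φ z ≤ Φ c := by
  obtain ⟨l, hl_nonneg, hl_sum, hz_le⟩ := hz
  calc Φ z ≤ Φ (∑ a ∈ A, l a • a) := hΦ fun k => by simpa using hz_le k
    _ = ∑ a ∈ A, l a • Φ a := by simp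
    _ ≤ ∑ a ∈ A, l a • Φ c :=
      sum_le_sum fun a ha => smul_le_smul_of_nonneg_left (hc a ha) (hl_nonneg a)
    _ = Φ c := by rw [← sum_smul, hl_sum, one_smul]

theorem mem_extremePoints_vrs_of_forall_le {V : Type*} [AddCommMonoid V] [LinearOrder V]
    [IsOrderedCancelAddMonoid V] [Module ℝ V] [PosSMulStrictMono ℝ V]
    {Φ : (Fin m → ℝ) →ₗ[ℝ] V} (hΦ : Monotone Φ) (hΦ_inj : Function.Injective Φ) {c : Fin m → ℝ}
    (hcA : c ∈ A) (hc : ∀ a ∈ A, Φ a ≤ Φ c) : c ∈ (vrs A).extremePoints ℝ :=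
  mem_extremePoints_of_forall_le_of_injective Φ hΦ_inj (mem_vrs_of_mem hcA)
    fun _ hz => map_le_of_mem_vrs hΦ hc hz

end Vrs

theorem stmt7_general {m : ℕ} (A Fbar : Finset (Fin m → ℝ))
    (π : Fin m → ℝ) (β : ℝ) (hπ : ∀ i, 0 ≤ π i)
    (hsep : ∀ a ∈ Fbar, ∑ i, π i * a i ≤ β)
    (b : Fin m → ℝ) (hb : b ∈ A) (hbβ : β < ∑ i, π i * b i) :
    (∀ a ∈ A.filter (fun a => ∀ a' ∈ A, ∑ i, π i * a' i ≤ ∑ i, π i * a i), a ∉ Fbar) ∧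
    ∃ a ∈ A.filter (fun a => ∀ a' ∈ A, ∑ i, π i * a' i ≤ ∑ i, π i * a i),
      a ∈ Set.extremePoints ℝ (vrs A) := by
  refine ⟨fun a ha haF => ?_, ?_⟩
  · have hba : ∑ i, π i * b i ≤ ∑ i, π i * a i := (mem_filter.1 ha).2 b hb
    linarith [hsep a haF]
  obtain ⟨c, hcA, hc⟩ := A.exists_max_image (lexWithDot π) ⟨b, hb⟩
  exact ⟨c, mem_filter.2 ⟨hcA, fun a ha => dotProduct_le_of_lexWithDot_le (hc a ha)⟩,
    mem_extremePoints_vrs_of_forall_le (lexWithDot_mono hπ) (lexWithDot_injective π) hcA hc⟩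

theorem stmt7 {m : ℕ} (A Fbar : Finset (Fin m → ℝ)) (hFA : Fbar ⊆ A)
    (π : Fin m → ℝ) (β : ℝ) (hπ : ∀ i, 0 ≤ π i) (hπ0 : π ≠ 0)
    (hsep : ∀ a ∈ Fbar, ∑ i, π i * a i ≤ β)
    (b : Fin m → ℝ) (hb : b ∈ A) (hbβ : β < ∑ i, π i * b i) :
    (∀ a ∈ A.filter (fun a => ∀ a' ∈ A, ∑ i, π i * a' i ≤ ∑ i, π i * a i), a ∉ Fbar) ∧
    ∃ a ∈ A.filter (fun a => ∀ a' ∈ A, ∑ i, π i * a' i ≤ ∑ i, π i * a i),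
      a ∈ Set.extremePoints ℝ (vrs A) :=
  stmt7_general A Fbar π β hπ hsep b hb hbβ
end
end

section
/- An extreme point a of vrs(A) does not belong to vrs(A \ {a}). Consequently, in BuildHull, a frame element can never be discarded as belonging to a partial hull vrs(F̄) with a ∉ F̄. -/
open scoped Classical
open Finset

noncomputable section

/-!
Write `vrs S` as the set of points lying below the convex hull of `S`. If the extreme point `a`
of `vrs A` lay in `vrs F` for some `F ⊆ A`, it would lie below a point `x` of `conv F ⊆ vrs A`;
then `a` is the midpoint of `x` and `2a - x ≤ a`, both in the lower set `vrs A`, so `x = a`.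
Thus `a` is an extreme point of `conv F`, hence belongs to `F`.
-/

theorem IsLowerSet.eq_of_mem_extremePoints_of_le {𝕜 E : Type*} [Field 𝕜] [LinearOrder 𝕜]
    [IsStrictOrderedRing 𝕜] [AddCommGroup E] [PartialOrder E] [IsOrderedAddMonoid E]
    [Module 𝕜 E] {s : Set E} {a x : E} (hs : IsLowerSet s) (ha : a ∈ s.extremePoints 𝕜)
    (hx : x ∈ s) (hax : a ≤ x) : x = a := by
  have hreflect : a + (a - x) ∈ s := hs (by simpa using sub_nonpos.2 hax) ha.1
  refine ha.2 hx hreflect ⟨1 / 2, 1 / 2, by norm_num, by norm_num, by norm_num, ?_⟩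
  have hsum : x + (a + (a - x)) = (2 : 𝕜) • a := by rw [two_smul]; abel
  rw [← smul_add, hsum, smul_smul]
  norm_num

variable {m : ℕ}

theorem mem_vrs_iff {S : Finset (Fin m → ℝ)} {z : Fin m → ℝ} :
    z ∈ vrs S ↔ ∃ x ∈ convexHull ℝ (S : Set (Fin m → ℝ)), z ≤ x := by
  constructor
  · rintro ⟨l, hl0, hl1, hzl⟩
    exact ⟨∑ c ∈ S, l c • c, Finset.mem_convexHull'.2 ⟨l, fun c _ => hl0 c, hl1, rfl⟩,
      fun k => by simpa [Finset.sum_apply] using hzl k⟩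
  · rintro ⟨x, hx, hzx⟩
    obtain ⟨w, hw0, hw1, rfl⟩ := Finset.mem_convexHull'.1 hx
    set l : (Fin m → ℝ) → ℝ := fun c => if c ∈ S then w c else 0
    have hlw : ∀ c ∈ S, l c = w c := fun c hc => if_pos hc
    refine ⟨l, fun c => ?_, by rwa [sum_congr rfl hlw], fun k => ?_⟩
    · by_cases hc : c ∈ S
      · exact (hlw c hc).symm ▸ hw0 c hc
      · exact (if_neg hc).ge
    · rw [sum_congr rfl fun c hc => congrArg (· * c k) (hlw c hc)]
      simpa [Finset.sum_apply] using hzx k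

theorem isLowerSet_vrs (S : Finset (Fin m → ℝ)) : IsLowerSet (vrs S) :=
  fun _ _ hzy hz => let ⟨l, hl0, hl1, hzl⟩ := hz; ⟨l, hl0, hl1, fun k => (hzy k).trans (hzl k)⟩

theorem convexHull_subset_vrs (S : Finset (Fin m → ℝ)) :
    convexHull ℝ (S : Set (Fin m → ℝ)) ⊆ vrs S :=
  fun x hx => mem_vrs_iff.2 ⟨x, hx, le_rfl⟩

theorem mem_of_mem_extremePoints_vrs_of_mem_vrs {A F : Finset (Fin m → ℝ)} {a : Fin m → ℝ}
    (ha : a ∈ (vrs A).extremePoints ℝ) (hFA : F ⊆ A) (haF : a ∈ vrs F) : a ∈ F := by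
  obtain ⟨x, hxF, hax⟩ := mem_vrs_iff.1 haF
  have hconv : convexHull ℝ (F : Set (Fin m → ℝ)) ⊆ vrs A :=
    (convexHull_mono (coe_subset.2 hFA)).trans (convexHull_subset_vrs A)
  have hxa : x = a := (isLowerSet_vrs A).eq_of_mem_extremePoints_of_le ha (hconv hxF) hax
  subst hxa
  exact extremePoints_convexHull_subset
    (inter_extremePoints_subset_extremePoints_of_subset hconv ⟨hxF, ha⟩)

theorem stmt11 {m : ℕ} (A : Finset (Fin m → ℝ)) (a : Fin m → ℝ)
    (ha : a ∈ Set.extremePoints ℝ (vrs A)) :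
    a ∉ vrs (A.erase a) ∧
    ∀ Fbar : Finset (Fin m → ℝ), Fbar ⊆ A → a ∉ Fbar → a ∉ vrs Fbar :=
  ⟨fun h => notMem_erase a A (mem_of_mem_extremePoints_vrs_of_mem_vrs ha (erase_subset a A) h),
    fun _ hFA haF h => haF (mem_of_mem_extremePoints_vrs_of_mem_vrs ha hFA h)⟩
end
end
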